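/- arXiv:1909.01125 — 5 statements merged into one kernel-verified Lean document; each statement's English description precedes it below -/
import Mathlib

section
/- The generalized rotation ρ is a bijection from {0,1}^n to itself. -/
/-- The generalized rotation on binary words: if `w = 1^k 0 …` with `k < m`,
move the block `1^k 0` to the tail as `0 1^k`; otherwise move `1^m` to the tail. -/
def rho (m : ℕ) (w : List Bool) : List Bool :=
  let k := (w.takeWhile (fun b => b)).length
  if k < m then w.drop (k + 1) ++ [false] ++ List.replicate k true
  else w.drop m ++ List.replicate m true

private lemma takeWhile_repl (k : ℕ) (u : List Bool) :
    (List.replicate k true ++ false :: u).takeWhile (fun b => b) = List.replicate k true := by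
  induction k with
  | zero => simp [List.takeWhile]
  | succ k ih => simp [List.replicate_succ, List.takeWhile, ih]

private lemma takeWhile_repl' (k : ℕ) (u : List Bool) :
    (List.replicate k true ++ u).takeWhile (fun b => b)
      = List.replicate k true ++ u.takeWhile (fun b => b) := by
  induction k with
  | zero => simp
  | succ k ih => simp [List.replicate_succ, List.takeWhile, ih]

private lemma dropWhile_cons_prop {α : Type*} {p : α → Bool} {l : List α} {b : α} {t : List α}
    (h : l.dropWhile p = b :: t) : p b = false := by
  induction l with
  | nil => simp at h
  | cons a l ih =>
    rw [List.dropWhile_cons] at h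
    by_cases hp : p a
    · rw [if_pos hp] at h; exact ih h
    · rw [if_neg hp] at h; injection h with h1 _; subst h1; simpa using hp

private lemma rho_A {m : ℕ} (k : ℕ) (u : List Bool) (hk : k < m) :
    rho m (List.replicate k true ++ false :: u) = u ++ [false] ++ List.replicate k true := by
  unfold rho
  rw [takeWhile_repl]
  simp only [List.length_replicate, if_pos hk]
  congr 2
  rw [show List.replicate k true ++ false :: u
      = (List.replicate k true ++ [false]) ++ u by simp]
  exact List.drop_left' (by simp)

private lemma rho_B {m : ℕ} (u : List Bool) :
    rho m (List.replicate m true ++ u) = u ++ List.replicate m true := by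
  unfold rho
  rw [takeWhile_repl']
  simp only [List.length_append, List.length_replicate]
  rw [if_neg (by omega)]
  congr 1
  exact List.drop_left' (by simp)

/-- Decomposition of a word according to its leading block of ones. -/
private lemma decomp (m : ℕ) (w : List Bool) (hm : m ≤ w.length) :
    (∃ k u, k < m ∧ w = List.replicate k true ++ false :: u) ∨
    (∃ u, w = List.replicate m true ++ u) := by
  set k := (w.takeWhile (fun b => b)).length with hk
  have htw : w.takeWhile (fun b => b) = List.replicate k true := by
    apply List.eq_replicate_of_mem
    intro b hb
    simpa using List.mem_takeWhile_imp hb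
  by_cases h : k < m
  · left
    have hkl : k < w.length := lt_of_lt_of_le h hm
    have hdw : w.dropWhile (fun b => b) ≠ [] := by
      intro hnil
      have h2 := List.takeWhile_append_dropWhile (p := fun b => b) (l := w)
      rw [hnil, List.append_nil] at h2
      have h3 : k = w.length := by rw [hk, h2]
      omega
    obtain ⟨b, t, hbt⟩ := List.exists_cons_of_ne_nil hdw
    have hb : b = false := by simpa using dropWhile_cons_prop hbt
    refine ⟨k, t, h, ?_⟩
    conv_lhs => rw [← List.takeWhile_append_dropWhile (p := fun b => b) (l := w)]
    rw [htw, hbt, hb]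
  · right
    refine ⟨w.drop m, ?_⟩
    have hpre := List.takeWhile_prefix (p := fun b => b) (l := w)
    rw [htw] at hpre
    obtain ⟨t, ht⟩ := hpre
    have hrepl : List.replicate k true
        = List.replicate m true ++ List.replicate (k - m) true := by
      rw [← List.replicate_add]; congr 1; omega
    conv_lhs => rw [← ht]
    have hdrop : List.drop m w = List.replicate (k - m) true ++ t := by
      conv_lhs => rw [← ht, hrepl, List.append_assoc]
      exact List.drop_left' (by simp)
    rw [hdrop, hrepl]
    rw [List.append_assoc]

private lemma rho_key {m : ℕ} (w : List Bool) (hm : m ≤ w.length) :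
    rho m ((rho m w).reverse) = w.reverse := by
  rcases decomp m w hm with ⟨k, u, hk, rfl⟩ | ⟨u, rfl⟩
  · rw [rho_A k u hk]
    have h1 : (u ++ [false] ++ List.replicate k true).reverse
        = List.replicate k true ++ false :: u.reverse := by
      simp
    rw [h1, rho_A k u.reverse hk]
    simp
  · rw [rho_B u]
    have h1 : (u ++ List.replicate m true).reverse
        = List.replicate m true ++ u.reverse := by simp
    rw [h1, rho_B u.reverse]
    simp

private lemma rho_length {m : ℕ} (w : List Bool) (hm : m ≤ w.length) :
    (rho m w).length = w.length := by
  rcases decomp m w hm with ⟨k, u, hk, rfl⟩ | ⟨u, rfl⟩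
  · rw [rho_A k u hk]; simp; omega
  · rw [rho_B u]; simp; omega

/-- The generalized rotation ρ is a bijection from {0,1}^n to itself. -/
theorem stmt0 (m n : ℕ) (hm : 1 ≤ m) (hmn : m ≤ n) :
    Set.BijOn (rho m) {w : List Bool | w.length = n} {w : List Bool | w.length = n} := by
  have hmaps : Set.MapsTo (rho m) {w : List Bool | w.length = n} {w : List Bool | w.length = n} := by
    intro w hw
    simp only [Set.mem_setOf_eq] at hw ⊢
    rw [rho_length w (hw ▸ hmn), hw]
  have hmaps' : Set.MapsTo (fun v => (rho m v.reverse).reverse)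
      {w : List Bool | w.length = n} {w : List Bool | w.length = n} := by
    intro v hv
    simp only [Set.mem_setOf_eq] at hv ⊢
    rw [List.length_reverse, rho_length _ (by simpa using hv ▸ hmn), List.length_reverse, hv]
  refine Set.InvOn.bijOn ⟨?_, ?_⟩ hmaps hmaps'
  · intro w hw
    simp only [Set.mem_setOf_eq] at hw
    have h1 := rho_key w (hw ▸ hmn)
    show (rho m (rho m w).reverse).reverse = w
    rw [h1, List.reverse_reverse]
  · intro v hv
    simp only [Set.mem_setOf_eq] at hv
    have h1 := rho_key v.reverse (by simpa using hv ▸ hmn)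
    show rho m (rho m v.reverse).reverse = v
    rw [h1, List.reverse_reverse]
end

section
/- The generalized rotation preserves the number of ones: for every w ∈ {0,1}^n, the number of digits equal to 1 in ρ(w) equals the number of digits equal to 1 in w. -/
/-- The generalized rotation preserves the number of ones. -/
theorem stmt2 (m n : ℕ) (hm : 1 ≤ m) (hmn : m ≤ n) (w : List Bool) (hw : w.length = n) :
    (rho m w).count true = w.count true := by
  set k := (w.takeWhile (fun b => b)).length with hk
  have htw : w.takeWhile (fun b => b) = List.replicate k true := by
    apply List.eq_replicate_of_mem
    intro b hb
    have := List.mem_takeWhile_imp hb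
    simpa using this
  have hsplit : List.replicate k true ++ w.dropWhile (fun b => b) = w := by
    rw [← htw]; exact List.takeWhile_append_dropWhile
  have hdropk : w.drop k = w.dropWhile (fun b => b) := by
    conv_lhs => rw [← hsplit]
    rw [List.drop_append_of_le_length (by simp)]
    simp
  have hcount : w.count true = k + (w.dropWhile (fun b => b)).count true := by
    conv_lhs => rw [← hsplit]
    simp [List.count_append]
  have hr : rho m w = if k < m then w.drop (k+1) ++ [false] ++ List.replicate k true
      else w.drop m ++ List.replicate m true := rfl
  rw [hr]
  by_cases h : k < m
  · rw [if_pos h]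
    have hklt : k < w.length := by omega
    have hlen : 0 < (w.dropWhile (fun b => b)).length := by
      rw [← hdropk]; simp; omega
    obtain ⟨b, t, hbt⟩ := List.exists_cons_of_ne_nil (List.ne_nil_of_length_pos hlen)
    have hb : b = false := by
      have hh := List.head_dropWhile_not (fun b => b) (l := w) (List.ne_nil_of_length_pos hlen)
      simpa [hbt] using hh
    have hdt : w.drop (k + 1) = t := by
      rw [← List.drop_drop, hdropk, hbt]; simp
    rw [hdt, hcount, hbt, hb]
    simp [List.count_append]
    omega
  · rw [if_neg h]
    have hdm : w.drop m = (List.replicate k true).drop m ++ w.dropWhile (fun b => b) := by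
      conv_lhs => rw [← hsplit]
      rw [List.drop_append_of_le_length (by simp; omega)]
    rw [hdm, hcount]
    simp [List.count_append, List.drop_replicate]
    omega
end

section
/- Let Rev denote the reversal of binary words. Then ρ^{-1} = Rev ∘ ρ ∘ Rev, i.e., for all w ∈ {0,1}^n, ρ(Rev(ρ(Rev(w)))) = w. -/
lemma tw1 (k : ℕ) (X : List Bool) :
    (List.replicate k true ++ false :: X).takeWhile (fun b => b) = List.replicate k true := by
  induction k with
  | zero => simp [List.takeWhile]
  | succ n ih => simp [List.replicate_succ, List.takeWhile_cons, ih]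

lemma tw2 (m : ℕ) (X : List Bool) :
    (List.replicate m true ++ X).takeWhile (fun b => b)
      = List.replicate m true ++ X.takeWhile (fun b => b) := by
  induction m with
  | zero => simp
  | succ n ih => simp [List.replicate_succ, List.takeWhile_cons, ih]

lemma rho1 {m k : ℕ} (h : k < m) (d : List Bool) :
    rho m (List.replicate k true ++ false :: d) = d ++ false :: List.replicate k true := by
  simp only [rho, tw1, List.length_replicate, if_pos h]
  rw [show List.replicate k true ++ false :: d = (List.replicate k true ++ [false]) ++ d by simp,
    show k + 1 = (List.replicate k true ++ [false]).length by simp, List.drop_left]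
  simp

lemma rho2 (m : ℕ) (d : List Bool) :
    rho m (List.replicate m true ++ d) = d ++ List.replicate m true := by
  simp only [rho, tw2, List.length_append, List.length_replicate]
  rw [if_neg (by omega)]
  congr 1
  induction m with
  | zero => simp
  | succ n ih => simpa [List.replicate_succ] using ih

/-- ρ⁻¹ = Rev ∘ ρ ∘ Rev : for all w of length n, ρ(Rev(ρ(Rev w))) = w. -/
theorem stmt3 (m n : ℕ) (hm : 1 ≤ m) (hmn : m ≤ n) (w : List Bool) (hw : w.length = n) :
    rho m ((rho m w.reverse).reverse) = w := by
  set v := w.reverse with hv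
  have hw' : w = v.reverse := by simp [hv]
  have hlen : v.length = n := by simp [hv, hw]
  set k := (v.takeWhile (fun b => b)).length with hk
  have htw : v.takeWhile (fun b => b) = List.replicate k true := by
    apply List.eq_replicate_of_mem
    intro b hb
    simpa using List.mem_takeWhile_imp hb
  have htake : v.takeWhile (fun b => b) = v.take k :=
    List.prefix_iff_eq_take.mp (List.takeWhile_prefix _)
  by_cases h : k < m
  · have hklt : k < v.length := by omega
    have hne : v.dropWhile (fun b => b) ≠ [] := by
      intro hnil
      have h1 := List.takeWhile_append_dropWhile (p := fun b => b) (l := v)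
      rw [hnil] at h1
      have : (v.takeWhile (fun b => b)).length = v.length := by
        conv_rhs => rw [← h1]; simp
      omega
    obtain ⟨d, hd⟩ : ∃ d, v = List.replicate k true ++ false :: d := by
      refine ⟨(v.dropWhile (fun b => b)).tail, ?_⟩
      have hhead : (v.dropWhile (fun b => b)).head hne = false := by
        simpa using List.head_dropWhile_not (p := fun b => b) (l := v) hne
      conv_lhs => rw [← List.takeWhile_append_dropWhile (p := fun b => b) (l := v)]
      rw [htw, ← List.cons_head_tail hne, hhead]
      simp
    rw [hw', hd, rho1 h,
      show (d ++ false :: List.replicate k true).reverse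
        = List.replicate k true ++ false :: d.reverse by simp,
      rho1 h]
    simp
  · have hmk : m ≤ k := by omega
    have hvk : v.take m = List.replicate m true := by
      calc v.take m = (v.take k).take m := by rw [List.take_take, min_eq_left hmk]
        _ = (List.replicate k true).take m := by rw [← htake, htw]
        _ = List.replicate m true := by rw [List.take_replicate]; congr 1; omega
    obtain ⟨d, hd⟩ : ∃ d, v = List.replicate m true ++ d :=
      ⟨v.drop m, by rw [← hvk, List.take_append_drop]⟩
    rw [hw', hd, rho2,
      show (d ++ List.replicate m true).reverse
        = List.replicate m true ++ d.reverse by simp,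
      rho2]
    simp
end

section
/- Let w ∈ {0,1}^n, let s be the size of the necklace (cyclic rotation orbit) of the remainder word rw(w) and t the size of the necklace of the binary quotient word bqw(w). Then the size of the ρ-orbit of w is s·t. -/
/-- One-run encoding: lengths of the maximal runs of ones separated by the zeros,
so that w = 1^{a₀} 0 1^{a₁} 0 ⋯ 0 1^{a_k} has ore w = [a₀, a₁, …, a_k]. -/
def ore (w : List Bool) : List ℕ := (w.splitOn false).map List.length

/-- Inverse of the one-run encoding: [a₀, …, a_k] ↦ 1^{a₀} 0 1^{a₁} 0 ⋯ 0 1^{a_k}. -/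
def oreInv : List ℕ → List Bool
  | [] => []
  | [a] => List.replicate a true
  | a :: rest => List.replicate a true ++ false :: oreInv rest

/-!
In one-run coordinates `q = ore w`, a step of `ρ` either moves the first entry `a₀ < m` to the
end or transfers `m` from the first entry to the last (`rhoOre`). So the binary quotient word is
always rotated by one letter, while the remainder word is rotated by one exactly when that letter
is `0`. After `d` steps `bqw` is rotated by `d` and `rw` by the number `z(d)` of zeros among the
first `d` letters of `bqw bqw ⋯`; as `(rw, bqw)` determines `w`, `ρ^d w = w` iff `t ∣ d` and
`s ∣ z(d)`. Since `z(t c) = c z(t)`, this means `s t ∣ d` as soon as `s` and `z(t)` are coprime,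
and they are: `s` divides the length `k + 1` of `rw`, while `z(t)` divides the number `k` of zeros
of `bqw`.
-/

open Function

theorem Function.iterate_eq_self_iff_dvd_of_isLeast {α : Type*} {f : α → α} {x : α} {p : ℕ}
    (hp : IsLeast {d | 0 < d ∧ f^[d] x = x} p) (d : ℕ) : f^[d] x = x ↔ p ∣ d := by
  have hmin : minimalPeriod f x = p := by
    refine le_antisymm (IsPeriodicPt.minimalPeriod_le hp.1.1 hp.1.2) (hp.2 ⟨?_, ?_⟩)
    · exact minimalPeriod_pos_of_mem_periodicPts ⟨p, hp.1⟩
    · exact iterate_minimalPeriod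
  rw [← hmin, ← isPeriodicPt_iff_minimalPeriod_dvd]
  rfl

namespace List

variable {α β : Type*}

theorem iterate_rotate_one (l : List α) (d : ℕ) : (rotate · 1)^[d] l = l.rotate d := by
  induction d with
  | zero => simp
  | succ d ih => rw [iterate_succ_apply', ih, rotate_rotate]

theorem rotate_eq_self_iff_dvd_of_isLeast {l : List α} {s : ℕ}
    (hs : IsLeast {d | 0 < d ∧ l.rotate d = l} s) (d : ℕ) : l.rotate d = l ↔ s ∣ d := by
  have h := iterate_eq_self_iff_dvd_of_isLeast (f := (rotate · 1)) (x := l)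
    (by simpa only [iterate_rotate_one] using hs) d
  rwa [iterate_rotate_one] at h

theorem map_modifyLast {f : α → β} {g : α → α} {g' : β → β} (h : ∀ x, f (g x) = g' (f x))
    (l : List α) : (l.modifyLast g).map f = (l.map f).modifyLast g' := by
  rcases eq_nil_or_concat' l with rfl | ⟨l, a, rfl⟩
  · rfl
  · simp [modifyLast_concat, h]

theorem modifyLast_ne_nil {l : List α} (f : α → α) (h : l ≠ []) : l.modifyLast f ≠ [] := by
  rcases eq_nil_or_concat' l with rfl | ⟨l, a, rfl⟩
  · exact absurd rfl h
  · simp [modifyLast_concat]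

theorem map_modifyLast_eq_map {f : α → β} {g : α → α} (h : ∀ x, f (g x) = f x) (l : List α) :
    (l.modifyLast g).map f = l.map f := by
  rcases eq_nil_or_concat' l with rfl | ⟨l, a, rfl⟩
  · rfl
  · simp [modifyLast_concat, h]

end List

open List

theorem oreInv_cons (a : ℕ) {q : List ℕ} (hq : q ≠ []) :
    oreInv (a :: q) = replicate a true ++ false :: oreInv q := by
  cases q with
  | nil => exact absurd rfl hq
  | cons b q => rfl

theorem oreInv_eq_intercalate (q : List ℕ) :
    oreInv q = [false].intercalate (q.map (replicate · true)) := by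
  induction q with
  | nil => rfl
  | cons a q ih =>
    rcases eq_or_ne q [] with rfl | hq
    · simp [oreInv]
    · rw [oreInv_cons a hq, ih, map_cons, intercalate_cons_of_ne_nil (by simpa using hq)]
      simp

theorem oreInv_succ_cons (j : ℕ) (q : List ℕ) :
    oreInv ((j + 1) :: q) = true :: oreInv (j :: q) := by
  cases q <;> rfl

theorem ore_oreInv {q : List ℕ} (hq : q ≠ []) : ore (oreInv q) = q := by
  rw [ore, oreInv_eq_intercalate, splitOn_intercalate _ (by simp [mem_replicate]) (by simpa)]
  simp [Function.comp_def]

theorem exists_oreInv_eq (w : List Bool) : ∃ q ≠ [], oreInv q = w := by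
  induction w with
  | nil => exact ⟨[0], by simp, rfl⟩
  | cons b w ih =>
    obtain ⟨q, hq, rfl⟩ := ih
    cases b with
    | false => exact ⟨0 :: q, by simp, by simp [oreInv_cons 0 hq]⟩
    | true =>
      obtain ⟨a, q, rfl⟩ := exists_cons_of_ne_nil hq
      refine ⟨(a + 1) :: q, by simp, ?_⟩
      rcases eq_or_ne q [] with rfl | hq
      · simp [oreInv, replicate_succ]
      · simp [oreInv_cons _ hq, replicate_succ]

theorem oreInv_ore (w : List Bool) : oreInv (ore w) = w := by
  obtain ⟨q, hq, rfl⟩ := exists_oreInv_eq w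
  rw [ore_oreInv hq]

theorem ore_ne_nil (w : List Bool) : ore w ≠ [] := by
  obtain ⟨q, hq, rfl⟩ := exists_oreInv_eq w
  rwa [ore_oreInv hq]

theorem ore_injective : Injective ore :=
  LeftInverse.injective oreInv_ore

theorem oreInv_append_singleton {q : List ℕ} (hq : q ≠ []) (b : ℕ) :
    oreInv (q ++ [b]) = oreInv q ++ false :: replicate b true := by
  induction q with
  | nil => exact absurd rfl hq
  | cons a q ih =>
    rcases eq_or_ne q [] with rfl | hq
    · rfl
    · rw [cons_append, oreInv_cons a (by simp), oreInv_cons a hq, ih hq]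
      simp

theorem oreInv_modifyLast_add {q : List ℕ} (hq : q ≠ []) (c : ℕ) :
    oreInv (q.modifyLast (· + c)) = oreInv q ++ replicate c true := by
  obtain ⟨q, b, rfl⟩ := (eq_nil_or_concat' q).resolve_left hq
  rw [modifyLast_concat]
  rcases eq_or_ne q [] with rfl | hq
  · simp [oreInv]
  · simp [oreInv_append_singleton hq]

theorem count_false_oreInv_cons (a : ℕ) (q : List ℕ) :
    (oreInv (a :: q)).count false = q.length := by
  induction q generalizing a with
  | nil => simp [oreInv, count_replicate]
  | cons b q ih => simp [oreInv_cons a (cons_ne_nil b q), count_replicate, ih]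

theorem length_rho {m : ℕ} {w : List Bool} (hw : m ≤ w.length) :
    (rho m w).length = w.length := by
  have hk := (takeWhile_prefix (fun b => b) (l := w)).length_le
  simp only [rho]
  split_ifs <;> simp <;> omega

def rhoOre (m : ℕ) : List ℕ → List ℕ
  | [] => []
  | a :: q => if a < m then q ++ [a] else ((a - m) :: q).modifyLast (· + m)

theorem rhoOre_ne_nil (m : ℕ) {q : List ℕ} (hq : q ≠ []) : rhoOre m q ≠ [] := by
  obtain ⟨a, q, rfl⟩ := exists_cons_of_ne_nil hq
  rw [rhoOre]
  split_ifs
  · simp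
  · exact modifyLast_ne_nil _ (cons_ne_nil _ _)

theorem rho_oreInv {m : ℕ} {q : List ℕ} (hq : q ≠ []) (hm : m ≤ (oreInv q).length) :
    rho m (oreInv q) = oreInv (rhoOre m q) := by
  obtain ⟨a, q, rfl⟩ := exists_cons_of_ne_nil hq
  rcases eq_or_ne q [] with rfl | hq'
  · obtain ⟨c, rfl⟩ := Nat.exists_eq_add_of_le (by simpa [oreInv] using hm : m ≤ a)
    simp [rho, rhoOre, oreInv]
    rfl
  · rw [oreInv_cons a hq']
    have htake : (replicate a true ++ false :: oreInv q).takeWhile (fun b => b)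
        = replicate a true := by
      simp [takeWhile_append_of_pos]
    simp only [rho, htake, length_replicate, rhoOre]
    split_ifs with ham
    · simp [oreInv_append_singleton hq', drop_append]
    · obtain ⟨c, rfl⟩ := Nat.exists_eq_add_of_le (not_lt.1 ham)
      rw [oreInv_modifyLast_add (cons_ne_nil _ _), Nat.add_sub_cancel_left, oreInv_cons c hq']
      simp [drop_append]

theorem ore_rho {m : ℕ} {w : List Bool} (hw : m ≤ w.length) :
    ore (rho m w) = rhoOre m (ore w) := by
  obtain ⟨q, hq, rfl⟩ := exists_oreInv_eq w
  rw [rho_oreInv hq hw, ore_oreInv hq, ore_oreInv (rhoOre_ne_nil m hq)]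

theorem ore_iterate_rho {m : ℕ} {w : List Bool} (hw : m ≤ w.length) (d : ℕ) :
    ore ((rho m)^[d] w) = (rhoOre m)^[d] (ore w) := by
  induction d generalizing w with
  | zero => rfl
  | succ d ih => rw [iterate_succ_apply, iterate_succ_apply, ih (length_rho hw ▸ hw), ore_rho hw]

theorem iterate_rho_eq_self_iff {m : ℕ} {w : List Bool} (hw : m ≤ w.length) (d : ℕ) :
    (rho m)^[d] w = w ↔ (rhoOre m)^[d] (ore w) = ore w := by
  rw [← ore_iterate_rho hw, ore_injective.eq_iff]

/-- In the notation of the paper, `rw(w) = remWord m (ore w)` and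
`bqw(w) = binQuotWord m (ore w)`. -/
def remWord (m : ℕ) (q : List ℕ) : List ℕ := q.map (· % m)

def binQuotWord (m : ℕ) (q : List ℕ) : List Bool := oreInv (q.map (· / m))

theorem binQuotWord_cons_of_lt {m a : ℕ} (ha : a < m) {q : List ℕ} (hq : q ≠ []) :
    binQuotWord m (a :: q) = false :: binQuotWord m q := by
  simp [binQuotWord, Nat.div_eq_of_lt ha, oreInv_cons 0 (mt map_eq_nil_iff.1 hq)]

theorem binQuotWord_cons_of_le {m a : ℕ} (hm : 0 < m) (ha : m ≤ a) (q : List ℕ) :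
    binQuotWord m (a :: q) = true :: binQuotWord m ((a - m) :: q) := by
  obtain ⟨c, rfl⟩ := Nat.exists_eq_add_of_le ha
  simp [binQuotWord, Nat.add_div_left _ hm, oreInv_succ_cons]

theorem binQuotWord_append_singleton_of_lt {m a : ℕ} (ha : a < m) {q : List ℕ} (hq : q ≠ []) :
    binQuotWord m (q ++ [a]) = binQuotWord m q ++ [false] := by
  simp [binQuotWord, Nat.div_eq_of_lt ha, oreInv_append_singleton (mt map_eq_nil_iff.1 hq)]

theorem binQuotWord_modifyLast_add {m : ℕ} (hm : 0 < m) {q : List ℕ} (hq : q ≠ []) :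
    binQuotWord m (q.modifyLast (· + m)) = binQuotWord m q ++ [true] := by
  rw [binQuotWord, map_modifyLast (g' := (· + 1)) (fun x => Nat.add_div_right x hm),
    oreInv_modifyLast_add (mt map_eq_nil_iff.1 hq)]
  rfl

theorem remWord_rhoOre {m : ℕ} (hm : 0 < m) (q : List ℕ) :
    remWord m (rhoOre m q) =
      (remWord m q).rotate (if (binQuotWord m q).head? = some false then 1 else 0) := by
  rcases q with _ | ⟨a, q⟩
  · rfl
  by_cases ham : a < m
  · rcases eq_or_ne q [] with rfl | hq
    · simp [rhoOre, remWord, ham]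
    · simp [rhoOre, remWord, ham, binQuotWord_cons_of_lt ham hq]
  · obtain ⟨c, rfl⟩ := Nat.exists_eq_add_of_le (not_lt.1 ham)
    rw [rhoOre, if_neg ham, binQuotWord_cons_of_le hm (not_lt.1 ham), remWord,
      map_modifyLast_eq_map (by simp)]
    simp [remWord]

theorem binQuotWord_rhoOre {m : ℕ} (hm : 0 < m) (q : List ℕ) :
    binQuotWord m (rhoOre m q) = (binQuotWord m q).rotate 1 := by
  rcases q with _ | ⟨a, q⟩
  · rfl
  by_cases ham : a < m
  · rcases eq_or_ne q [] with rfl | hq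
    · simp [rhoOre, binQuotWord, ham, Nat.div_eq_of_lt ham, oreInv]
    · simp [rhoOre, ham, binQuotWord_cons_of_lt ham hq, binQuotWord_append_singleton_of_lt ham hq]
  · rw [rhoOre, if_neg ham, binQuotWord_cons_of_le hm (not_lt.1 ham),
      binQuotWord_modifyLast_add hm (cons_ne_nil _ _)]
    simp

/-- `cyclicFalseCount B d` counts the letters `false` among the first `d` letters of the
infinite periodic word `B B B ⋯`. -/
def cyclicFalseCount (B : List Bool) : ℕ → ℕ
  | 0 => 0
  | d + 1 => cyclicFalseCount B d + if (B.rotate d).head? = some false then 1 else 0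

theorem cyclicFalseCount_add_of_rotate_eq {B : List Bool} {t : ℕ} (ht : B.rotate t = B)
    (d : ℕ) : cyclicFalseCount B (t + d) = cyclicFalseCount B t + cyclicFalseCount B d := by
  induction d with
  | zero => rfl
  | succ d ih =>
    rw [← add_assoc, cyclicFalseCount, ih, cyclicFalseCount, ← rotate_rotate, ht, add_assoc]

theorem cyclicFalseCount_mul_of_rotate_eq {B : List Bool} {t : ℕ} (ht : B.rotate t = B)
    (c : ℕ) : cyclicFalseCount B (t * c) = c * cyclicFalseCount B t := by
  induction c with
  | zero => simp [cyclicFalseCount]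
  | succ c ih => rw [Nat.mul_succ, add_comm, cyclicFalseCount_add_of_rotate_eq ht, ih]; ring

theorem cyclicFalseCount_length (B : List Bool) :
    cyclicFalseCount B B.length = B.count false := by
  suffices ∀ d ≤ B.length, cyclicFalseCount B d = (B.take d).count false by
    simpa using this _ le_rfl
  intro d hd
  induction d with
  | zero => rfl
  | succ d ih =>
    rw [cyclicFalseCount, ih (by omega), take_add_one, head?_rotate hd,
      getElem?_eq_getElem hd]
    cases B[d] <;> simp

theorem cyclicFalseCount_dvd_count_false {B : List Bool} {t : ℕ}
    (ht : ∀ d, B.rotate d = B ↔ t ∣ d) : cyclicFalseCount B t ∣ B.count false := by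
  obtain ⟨c, hc⟩ := (ht _).1 (rotate_length B)
  rw [← cyclicFalseCount_length, hc, cyclicFalseCount_mul_of_rotate_eq ((ht t).2 dvd_rfl)]
  exact dvd_mul_left _ _

theorem rotate_cyclicFalseCount_and_rotate_eq_self_iff {α : Type*} {R : List α} {B : List Bool}
    {s t : ℕ} (hs : ∀ d, R.rotate d = R ↔ s ∣ d) (ht : ∀ d, B.rotate d = B ↔ t ∣ d)
    (hcop : s.Coprime (cyclicFalseCount B t)) (d : ℕ) :
    R.rotate (cyclicFalseCount B d) = R ∧ B.rotate d = B ↔ s * t ∣ d := by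
  have hBt : B.rotate t = B := (ht t).2 dvd_rfl
  constructor
  · rintro ⟨hR, hB⟩
    obtain ⟨c, rfl⟩ := (ht d).1 hB
    rw [cyclicFalseCount_mul_of_rotate_eq hBt, hs] at hR
    obtain ⟨c, rfl⟩ := hcop.dvd_of_dvd_mul_right hR
    exact ⟨c, by ring⟩
  · rintro ⟨c, rfl⟩
    rw [mul_comm s, mul_assoc, cyclicFalseCount_mul_of_rotate_eq hBt, hs, ht]
    exact ⟨dvd_mul_of_dvd_left (dvd_mul_right s c) _, dvd_mul_right t _⟩

theorem binQuotWord_iterate_rhoOre {m : ℕ} (hm : 0 < m) (q : List ℕ) (d : ℕ) :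
    binQuotWord m ((rhoOre m)^[d] q) = (binQuotWord m q).rotate d := by
  induction d with
  | zero => simp
  | succ d ih => rw [iterate_succ_apply', binQuotWord_rhoOre hm, ih, rotate_rotate]

theorem remWord_iterate_rhoOre {m : ℕ} (hm : 0 < m) (q : List ℕ) (d : ℕ) :
    remWord m ((rhoOre m)^[d] q) = (remWord m q).rotate (cyclicFalseCount (binQuotWord m q) d) := by
  induction d with
  | zero => simp [cyclicFalseCount]
  | succ d ih =>
    rw [iterate_succ_apply', remWord_rhoOre hm, binQuotWord_iterate_rhoOre hm, ih, rotate_rotate]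
    rfl

theorem eq_of_remWord_eq_of_binQuotWord_eq {m : ℕ} {q q' : List ℕ} (hq : q ≠ [])
    (hr : remWord m q' = remWord m q) (hb : binQuotWord m q' = binQuotWord m q) : q' = q := by
  have hq' : q' ≠ [] := by
    rintro rfl
    exact hq (map_eq_nil_iff.1 hr.symm)
  have hdiv : q'.map (· / m) = q.map (· / m) := by
    have h := congrArg ore hb
    rwa [binQuotWord, binQuotWord, ore_oreInv (by simpa), ore_oreInv (by simpa)] at h
  refine ext_getElem (by simpa [remWord] using congrArg length hr) fun i h h' => ?_
  have hmod : q'[i] % m = q[i] % m := by simpa [remWord, h, h'] using congrArg (·[i]?) hr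
  have hquot : q'[i] / m = q[i] / m := by simpa [h, h'] using congrArg (·[i]?) hdiv
  rw [← Nat.div_add_mod q'[i] m, ← Nat.div_add_mod q[i] m, hmod, hquot]

theorem iterate_rhoOre_eq_self_iff {m : ℕ} (hm : 0 < m) {q : List ℕ} (hq : q ≠ []) (d : ℕ) :
    (rhoOre m)^[d] q = q ↔
      (remWord m q).rotate (cyclicFalseCount (binQuotWord m q) d) = remWord m q ∧
        (binQuotWord m q).rotate d = binQuotWord m q := by
  have hr := remWord_iterate_rhoOre hm q d
  have hb := binQuotWord_iterate_rhoOre hm q d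
  refine ⟨fun h => ?_, fun h => eq_of_remWord_eq_of_binQuotWord_eq hq (hr.trans h.1) (hb.trans h.2)⟩
  rw [← hr, ← hb, h]
  exact ⟨rfl, rfl⟩

/-- The ρ-orbit size of w is the product of the necklace sizes of its remainder
word rw(w) and its binary quotient word bqw(w). -/
theorem stmt10 (m n : ℕ) (hm : 1 ≤ m) (hmn : m ≤ n) (w : List Bool) (hw : w.length = n)
    (s t p : ℕ)
    (hs : IsLeast {d | 0 < d ∧
      ((ore w).map (fun a => a % m)).rotate d = (ore w).map (fun a => a % m)} s)
    (ht : IsLeast {d | 0 < d ∧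
      (oreInv ((ore w).map (fun a => a / m))).rotate d
        = oreInv ((ore w).map (fun a => a / m))} t)
    (hp : IsLeast {d | 0 < d ∧ (rho m)^[d] w = w} p) :
    p = s * t := by
  obtain ⟨a, q, hq⟩ := exists_cons_of_ne_nil (ore_ne_nil w)
  have hR := rotate_eq_self_iff_dvd_of_isLeast hs
  have hB := rotate_eq_self_iff_dvd_of_isLeast ht
  have hcop : s.Coprime (cyclicFalseCount (binQuotWord m (ore w)) t) := by
    refine .of_dvd ((hR _).1 (rotate_length _)) (cyclicFalseCount_dvd_count_false hB) ?_
    simp only [binQuotWord, hq, map_cons, count_false_oreInv_cons, length_cons, length_map]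
    simp [Nat.coprime_self_add_left]
  have hperiod (d : ℕ) : (rho m)^[d] w = w ↔ s * t ∣ d := by
    rw [iterate_rho_eq_self_iff (hw ▸ hmn), iterate_rhoOre_eq_self_iff hm (ore_ne_nil w)]
    exact rotate_cyclicFalseCount_and_rotate_eq_self_iff hR hB hcop d
  have hp' := iterate_eq_self_iff_dvd_of_isLeast hp
  exact Nat.dvd_antisymm ((hp' _).1 ((hperiod _).2 dvd_rfl)) ((hperiod _).1 ((hp' _).2 dvd_rfl))
end

section
/- The ρ-orbit of the word w = 1 0^{n-1} (a one followed by n−1 zeros) has size exactly n. -/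
lemma rho_false_head (m : ℕ) (hm : 1 ≤ m) (l : List Bool) :
    rho m (false :: l) = l ++ [false] := by
  simp [rho, Nat.lt_of_lt_of_le Nat.zero_lt_one hm]

lemma rho_start (m n : ℕ) (hm : 1 ≤ m) (hn : 2 ≤ n) :
    rho m (true :: List.replicate (n - 1) false) =
      List.replicate (n - 1) false ++ [true] := by
  have htw : (true :: List.replicate (n-1) false).takeWhile (fun b => b)
      = [true] := by simp [List.takeWhile_cons, List.takeWhile_replicate]
  rcases eq_or_lt_of_le hm with h | h
  · simp [rho, htw, ← h]
  · simp only [rho, htw]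
    simp [h]
    have h1 : n - 1 = (n - 1 - 1) + 1 := by omega
    rw [h1, List.replicate_succ']
    simp

lemma rho_iter (m n : ℕ) (hm : 1 ≤ m) (hn : 2 ≤ n) :
    ∀ j, j ≤ n - 2 →
      (rho m)^[j] (List.replicate (n - 1) false ++ [true]) =
        List.replicate (n - 1 - j) false ++ true :: List.replicate j false := by
  intro j
  induction j with
  | zero => simp
  | succ j ih =>
    intro hj
    rw [Function.iterate_succ_apply', ih (by omega)]
    have h1 : n - 1 - j = (n - 1 - (j+1)) + 1 := by omega
    rw [h1, List.replicate_succ, List.cons_append, rho_false_head m hm]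
    rw [List.replicate_succ' (n := j)]
    simp

/-- The ρ-orbit of 1 0^{n-1} has size exactly n. -/
theorem stmt12 (m n : ℕ) (hm : 1 ≤ m) (hmn : m ≤ n) (hn : 2 ≤ n) :
    IsLeast {d | 0 < d ∧
      (rho m)^[d] (true :: List.replicate (n - 1) false)
        = true :: List.replicate (n - 1) false} n := by
  set w := true :: List.replicate (n - 1) false with hw
  have key : ∀ d, 1 ≤ d → d ≤ n - 1 →
      (rho m)^[d] w = List.replicate (n - d) false ++ true :: List.replicate (d - 1) false := by
    intro d h1 h2
    have hd : d = (d - 1) + 1 := by omega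
    rw [hd, Function.iterate_succ_apply, hw, rho_start m n hm hn,
      rho_iter m n hm hn (d-1) (by omega)]
    have e1 : n - (d - 1 + 1) = n - 1 - (d - 1) := by omega
    have e2 : d - 1 + 1 - 1 = d - 1 := by omega
    rw [e1, e2]
  constructor
  · refine ⟨by omega, ?_⟩
    have hn1 : n = (n - 1) + 1 := by omega
    rw [hn1, Function.iterate_succ_apply', key (n-1) (by omega) le_rfl]
    have : n - (n - 1) = 1 := by omega
    rw [this]
    rw [show List.replicate 1 false ++ true :: List.replicate (n-1-1) false
        = false :: true :: List.replicate (n-1-1) false from rfl]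
    rw [rho_false_head m hm]
    rw [show (true :: List.replicate (n-1-1) false) ++ [false]
        = true :: (List.replicate (n-1-1) false ++ [false]) from rfl]
    rw [← List.replicate_succ']
    have e3 : n - 1 - 1 + 1 = n - 1 := by omega
    rw [e3]
  · intro d hd
    obtain ⟨hd0, hdeq⟩ := hd
    by_contra hlt
    push_neg at hlt
    have := key d hd0 (by omega)
    rw [hdeq] at this
    have hhd : w.head? = (List.replicate (n - d) false ++ true :: List.replicate (d - 1) false).head? := by rw [this]
    have hnd : 1 ≤ n - d := by omega
    have : List.replicate (n-d) false = false :: List.replicate (n-d-1) false := by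
      rw [← List.replicate_succ]; congr 1; omega
    rw [this] at hhd
    simp [hw] at hhd
end
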